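/- arXiv:2604.26127 — 7 statements merged into one kernel-verified Lean document; each statement's English description precedes it below -/
import Mathlib

section
/- Let g, m be positive integers and let B(g,m) be the set of numerical semigroups S with genus g, multiplicity m, and F(S) < 2m. The map sending a subset B ⊆ {1,...,m-1} of size 2m - g - 2 to S_{m,B} = (m + B) ∪ {0, m} ∪ {n : n ≥ 2m} is a bijection from such subsets to B(g,m). -/
/-- A numerical semigroup: a subset of ℕ containing 0, closed under addition,
with finite complement. -/
def IsNumericalSemigroup (S : Set ℕ) : Prop :=
  0 ∈ S ∧ (∀ a ∈ S, ∀ b ∈ S, a + b ∈ S) ∧ Sᶜ.Finite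

/-- The genus: number of gaps. -/
noncomputable def genus (S : Set ℕ) : ℕ := Sᶜ.ncard

/-- The Frobenius number: the largest gap. -/
noncomputable def frob (S : Set ℕ) : ℕ := sSup Sᶜ

/-- `elt S k` is the k-th smallest nonzero element of `S` (1-indexed). -/
noncomputable def elt (S : Set ℕ) (k : ℕ) : ℕ :=
  Nat.nth (fun n => n ∈ S ∧ n ≠ 0) (k - 1)

/-- The multiplicity: the smallest nonzero element. -/
noncomputable def mult (S : Set ℕ) : ℕ := elt S 1


/-!
Every element of `S_{m,B}` is `0` or at least `m`, and a sum of two elements `≥ m` is `≥ 2m`, so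
`S_{m,B}` is a numerical semigroup; its gaps are `1, …, m-1` together with `m + b` for
`b ∈ {1, …, m-1} \ B`, whence its genus is `2m - 2 - |B|`. Conversely, a numerical semigroup with
multiplicity `m` and Frobenius number below `2m` contains `[2m, ∞)` and no element of `(0, m)`,
so it is `S_{m,B}` for `B = {b ∈ {1, …, m-1} | m + b ∈ S}`, and `B` is recovered from `S_{m,B}`.
-/

open Set

def shiftSemigroup (m : ℕ) (B : Finset ℕ) : Set ℕ :=
  (fun b => m + b) '' (↑B) ∪ ({0, m} : Set ℕ) ∪ {n | 2 * m ≤ n}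

section General

variable {S : Set ℕ}

theorem isLeast_mult (hS : IsNumericalSemigroup S) : IsLeast {n | n ∈ S ∧ n ≠ 0} (mult S) := by
  obtain ⟨n, hnS, hn⟩ := hS.2.2.infinite_compl.exists_gt (α := ℕ) 0
  rw [compl_compl] at hnS
  simpa [mult, elt, Nat.nth_zero] using
    isLeast_csInf (s := {n | n ∈ S ∧ n ≠ 0}) ⟨n, hnS, hn.ne'⟩

theorem mult_eq_of_isLeast {m : ℕ} (h : IsLeast {n | n ∈ S ∧ n ≠ 0} m) : mult S = m := by
  simpa [mult, elt, Nat.nth_zero] using h.csInf_eq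

theorem frob_lt_of_forall_mem {k : ℕ} (hk : 0 < k) (h : ∀ n, k ≤ n → n ∈ S) : frob S < k :=
  (csSup_le' (a := k - 1) fun n hn => by
    by_contra hlt
    exact hn (h n (by omega))).trans_lt (by omega)

theorem mem_of_frob_lt (hS : Sᶜ.Finite) {n : ℕ} (hn : frob S < n) : n ∈ S := by
  by_contra hnS
  exact (le_csSup hS.bddAbove hnS).not_gt hn

end General

namespace shiftSemigroup

variable {m : ℕ} {B : Finset ℕ}

theorem mem_iff {n : ℕ} :
    n ∈ shiftSemigroup m B ↔ (∃ b ∈ B, m + b = n) ∨ n = 0 ∨ n = m ∨ 2 * m ≤ n := by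
  simp only [shiftSemigroup, mem_union, mem_image, Finset.mem_coe, mem_insert_iff,
    mem_singleton_iff, mem_ofPred_eq, or_assoc]

theorem eq_zero_or_le_of_mem {n : ℕ} (hn : n ∈ shiftSemigroup m B) : n = 0 ∨ m ≤ n := by
  rcases mem_iff.1 hn with ⟨b, -, rfl⟩ | h | h | h <;> omega

theorem add_mem_iff {b : ℕ} (hb : b ∈ Icc 1 (m - 1)) :
    m + b ∈ shiftSemigroup m B ↔ b ∈ B := by
  refine ⟨fun h => ?_, fun h => mem_iff.2 (Or.inl ⟨b, h, rfl⟩)⟩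
  obtain ⟨hb1, hb2⟩ := hb
  rcases mem_iff.1 h with ⟨c, hc, hcb⟩ | h | h | h
  · obtain rfl : c = b := by omega
    exact hc
  all_goals omega

theorem isNumericalSemigroup (m : ℕ) (B : Finset ℕ) :
    IsNumericalSemigroup (shiftSemigroup m B) := by
  refine ⟨mem_iff.2 (by omega), fun a ha b hb => ?_, (finite_Iio (2 * m)).subset ?_⟩
  · rcases eq_zero_or_le_of_mem ha with rfl | ha'
    · simpa using hb
    rcases eq_zero_or_le_of_mem hb with rfl | hb'
    · simpa using ha
    exact mem_iff.2 (by omega)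
  · intro n hn
    by_contra h
    exact hn (mem_iff.2 (by simp_all))

theorem compl_eq :
    (shiftSemigroup m B)ᶜ = Icc 1 (m - 1) ∪ (fun b => m + b) '' (Icc 1 (m - 1) \ ↑B) := by
  ext n
  rw [mem_compl_iff, mem_union, mem_image]
  constructor
  · intro hn
    have hnB : n - m ∈ Icc 1 (m - 1) → n - m ∉ B := fun h hB =>
      hn (mem_iff.2 (Or.inl ⟨n - m, hB, by simp at h; omega⟩))
    by_cases hnm : n ≤ m - 1
    · exact Or.inl ⟨Nat.one_le_iff_ne_zero.2 fun h => hn (mem_iff.2 (by omega)), hnm⟩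
    · have : m < n ∧ n < 2 * m := by
        constructor <;> by_contra <;> exact hn (mem_iff.2 (by omega))
      exact Or.inr ⟨n - m, ⟨⟨by omega, by omega⟩, hnB ⟨by omega, by omega⟩⟩, by omega⟩
  · rintro (⟨hn1, hn2⟩ | ⟨b, ⟨hb, hbB⟩, rfl⟩)
    · intro hn
      rcases eq_zero_or_le_of_mem hn with h | h <;> omega
    · exact fun h => hbB ((add_mem_iff hb).1 h)

theorem genus_add_card_add_two (hB : ↑B ⊆ Icc 1 (m - 1)) (hm : 0 < m) :
    genus (shiftSemigroup m B) + B.card + 2 = 2 * m := by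
  have hdisj : Disjoint (Icc 1 (m - 1)) ((fun b => m + b) '' (Icc 1 (m - 1) \ ↑B)) := by
    rw [disjoint_left]
    rintro _ ⟨-, hn⟩ ⟨b, ⟨⟨hb, -⟩, -⟩, rfl⟩
    simp only at hn
    omega
  have hcard : B.card ≤ m - 1 := by
    simpa using Finset.card_le_card (t := Finset.Icc 1 (m - 1)) fun b hb => by simpa using hB hb
  rw [genus, compl_eq, ncard_union_eq hdisj (finite_Icc _ _) ((finite_Icc _ _).sdiff.image _),
    ncard_image_of_injective _ (add_right_injective m), ncard_sdiff (by simpa using hB),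
    ← Finset.coe_Icc, ncard_coe_finset, ncard_coe_finset, Nat.card_Icc]
  omega

theorem mult_eq (hm : 0 < m) : mult (shiftSemigroup m B) = m :=
  mult_eq_of_isLeast ⟨⟨mem_iff.2 (by omega), hm.ne'⟩, fun _ ⟨hn, hn0⟩ =>
    (eq_zero_or_le_of_mem hn).resolve_left hn0⟩

theorem frob_lt (hm : 0 < m) : frob (shiftSemigroup m B) < 2 * m :=
  frob_lt_of_forall_mem (by omega) fun _ hn => mem_iff.2 (by omega)

theorem injOn (m : ℕ) : InjOn (shiftSemigroup m) {B | ↑B ⊆ Icc 1 (m - 1)} := by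
  intro B hB B' hB' h
  ext b
  constructor <;> intro hb
  · rw [← add_mem_iff (hB hb), ← h, add_mem_iff (hB hb)]
    exact hb
  · rw [← add_mem_iff (hB' hb), h, add_mem_iff (hB' hb)]
    exact hb

end shiftSemigroup

theorem IsNumericalSemigroup.exists_eq_shiftSemigroup {S : Set ℕ} (hS : IsNumericalSemigroup S)
    (hF : frob S < 2 * mult S) :
    ∃ B : Finset ℕ, ↑B ⊆ Icc 1 (mult S - 1) ∧ S = shiftSemigroup (mult S) B := by
  classical
  obtain ⟨⟨hmS, hm0⟩, hmin⟩ := isLeast_mult hS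
  refine ⟨(Finset.Icc 1 (mult S - 1)).filter (mult S + · ∈ S),
    by simp +contextual [subset_def], ?_⟩
  ext n
  rw [shiftSemigroup.mem_iff]
  constructor
  · intro hn
    by_cases h : n = 0 ∨ n = mult S ∨ 2 * mult S ≤ n
    · exact Or.inr h
    have : mult S ≤ n := hmin ⟨hn, by omega⟩
    exact Or.inl ⟨n - mult S, by simp only [Finset.mem_filter, Finset.mem_Icc]; grind, by omega⟩
  · rintro (⟨b, hb, rfl⟩ | rfl | rfl | h)
    · exact (Finset.mem_filter.1 hb).2
    · exact hS.1
    · exact hmS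
    · exact mem_of_frob_lt hS.2.2 (by omega)

theorem stmt3_general (g m : ℕ) :
    Set.BijOn
      (fun B : Finset ℕ => (fun b => m + b) '' (↑B) ∪ ({0, m} : Set ℕ) ∪ {n | 2 * m ≤ n})
      {B : Finset ℕ | ↑B ⊆ Set.Icc 1 (m - 1) ∧ B.card + g + 2 = 2 * m}
      {S : Set ℕ | IsNumericalSemigroup S ∧ genus S = g ∧ mult S = m ∧ frob S < 2 * m} := by
  change BijOn (shiftSemigroup m) _ _
  refine ⟨?_, (shiftSemigroup.injOn m).mono fun B hB => hB.1, ?_⟩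
  · rintro B ⟨hB, hcard⟩
    have hm : 0 < m := by omega
    have hgenus := shiftSemigroup.genus_add_card_add_two hB hm
    exact ⟨shiftSemigroup.isNumericalSemigroup m B, by omega, shiftSemigroup.mult_eq hm,
      shiftSemigroup.frob_lt hm⟩
  · rintro S ⟨hS, rfl, rfl, hF⟩
    obtain ⟨B, hB, hSB⟩ := hS.exists_eq_shiftSemigroup hF
    have hgenus :=
      shiftSemigroup.genus_add_card_add_two hB (Nat.pos_of_ne_zero (isLeast_mult hS).1.2)
    rw [← hSB] at hgenus
    exact ⟨B, ⟨hB, by omega⟩, hSB.symm⟩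

theorem stmt3 (g m : ℕ) (hg : 0 < g) (hm : 0 < m) :
    Set.BijOn
      (fun B : Finset ℕ => (fun b => m + b) '' (↑B) ∪ ({0, m} : Set ℕ) ∪ {n | 2 * m ≤ n})
      {B : Finset ℕ | ↑B ⊆ Set.Icc 1 (m - 1) ∧ B.card + g + 2 = 2 * m}
      {S : Set ℕ | IsNumericalSemigroup S ∧ genus S = g ∧ mult S = m ∧ frob S < 2 * m} :=
  stmt3_general g m
end

section
/- For positive integers g and m, the set B(g,m) of numerical semigroups with genus g, multiplicity m, and Frobenius number less than 2m is nonempty if and only if g/2 + 1 ≤ m ≤ g + 1. -/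
lemma mult_eq_sInf (S : Set ℕ) : mult S = sInf {n | n ∈ S ∧ n ≠ 0} := by
  simp [mult, elt, Nat.nth_zero]

theorem stmt4 (g m : ℕ) (hg : 0 < g) (hm : 0 < m) :
    (∃ S : Set ℕ, IsNumericalSemigroup S ∧ genus S = g ∧ mult S = m ∧ frob S < 2 * m) ↔
      ((g : ℚ) / 2 + 1 ≤ (m : ℚ) ∧ (m : ℚ) ≤ (g : ℚ) + 1) := by
  constructor
  · rintro ⟨S, ⟨h0, hadd, hfin⟩, hgen, hmul, hfr⟩
    rw [mult_eq_sInf] at hmul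
    have hgen' : Sᶜ.ncard = g := hgen
    -- the set {n ∈ S | n ≠ 0} is nonempty
    have hne : {n | n ∈ S ∧ n ≠ 0}.Nonempty := by
      by_contra h
      rw [Set.not_nonempty_iff_eq_empty] at h
      rw [h, Nat.sInf_empty] at hmul
      omega
    have hmem := Nat.sInf_mem hne
    rw [hmul] at hmem
    have hmS : m ∈ S := hmem.1
    have hleast : ∀ k ∈ S, k ≠ 0 → m ≤ k := by
      intro k hk hk0
      rw [← hmul]
      exact Nat.sInf_le ⟨hk, hk0⟩
    -- every gap is < 2m and ≠ 0 and ≠ m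
    have hgap : ∀ x ∈ Sᶜ, x < 2 * m := by
      intro x hx
      have : x ≤ frob S := le_csSup hfin.bddAbove hx
      omega
    -- lower bound on genus: Ico 1 m ⊆ Sᶜ
    have hsub1 : (↑(Finset.Ico 1 m) : Set ℕ) ⊆ Sᶜ := by
      intro x hx
      simp only [Finset.coe_Ico, Set.mem_Ico] at hx
      intro hxS
      have := hleast x hxS (by omega)
      omega
    have hlow : m - 1 ≤ g := by
      have := Set.ncard_le_ncard hsub1 hfin
      rwa [Set.ncard_coe_finset, Nat.card_Ico, hgen'] at this
    -- upper bound on genus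
    have hsub2 : Sᶜ ⊆ (↑(Finset.Ico 1 (2 * m) \ {m}) : Set ℕ) := by
      intro x hx
      have hx0 : x ≠ 0 := by intro h; exact hx (h ▸ h0)
      have hxm : x ≠ m := by intro h; exact hx (h ▸ hmS)
      have := hgap x hx
      simp only [Finset.coe_sdiff, Finset.coe_Ico, Finset.coe_singleton, Set.mem_diff,
        Set.mem_Ico, Set.mem_singleton_iff]
      omega
    have hhigh : g ≤ 2 * m - 2 := by
      have hcard : (Finset.Ico 1 (2 * m) \ {m}).card = 2 * m - 2 := by
        rw [Finset.sdiff_singleton_eq_erase, Finset.card_erase_of_mem (by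
          simp [Finset.mem_Ico]; omega), Nat.card_Ico]
        omega
      have := Set.ncard_le_ncard hsub2 (Finset.finite_toSet _)
      rwa [Set.ncard_coe_finset, hcard, hgen'] at this
    have h2m : g + 2 ≤ 2 * m := by omega
    have h1q : (g : ℚ) + 2 ≤ 2 * m := by exact_mod_cast h2m
    have h2q : (m : ℚ) ≤ g + 1 := by exact_mod_cast (by omega : m ≤ g + 1)
    constructor <;> linarith
  · rintro ⟨h1, h2⟩
    have h2m : g + 2 ≤ 2 * m := by
      have : (g : ℚ) + 2 ≤ 2 * m := by linarith
      exact_mod_cast this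
    have hmg : m ≤ g + 1 := by exact_mod_cast h2
    set c : ℕ := 3 * m - (g + 1) with hc
    have hc1 : m + 1 ≤ c := by omega
    have hc2 : c ≤ 2 * m := by omega
    refine ⟨{0} ∪ Set.Ico m c ∪ Set.Ici (2 * m), ⟨?_, ?_, ?_⟩, ?_, ?_, ?_⟩
    · left; left; rfl
    · rintro a (ha | ha) b (hb | hb)
      · rcases ha with ha | ha <;> rcases hb with hb | hb <;>
          simp only [Set.mem_singleton_iff, Set.mem_Ico] at * <;>
          first
            | (left; left; simp only [Set.mem_singleton_iff]; omega)
            | (left; right; simp only [Set.mem_Ico]; omega)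
            | (right; simp only [Set.mem_Ici]; omega)
      · rcases ha with ha | ha <;>
          simp only [Set.mem_singleton_iff, Set.mem_Ico, Set.mem_Ici] at * <;>
          (right; simp only [Set.mem_Ici]; omega)
      · rcases hb with hb | hb <;>
          simp only [Set.mem_singleton_iff, Set.mem_Ico, Set.mem_Ici] at * <;>
          first
            | (right; simp only [Set.mem_Ici]; omega)
            | (left; right; simp only [Set.mem_Ico]; omega)
      · simp only [Set.mem_Ici] at *
        right; simp only [Set.mem_Ici]; omega
    · apply Set.Finite.subset (Set.finite_Ico 0 (2 * m))
      intro x hx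
      simp only [Set.mem_compl_iff, Set.mem_union, Set.mem_singleton_iff, Set.mem_Ico,
        Set.mem_Ici, not_or, not_and, not_le, not_lt] at hx
      simp only [Set.mem_Ico]
      omega
    · have hcompl : ({0} ∪ Set.Ico m c ∪ Set.Ici (2 * m))ᶜ
          = (↑(Finset.Ico 1 m ∪ Finset.Ico c (2 * m)) : Set ℕ) := by
        ext x
        simp only [Set.mem_compl_iff, Set.mem_union, Set.mem_singleton_iff, Set.mem_Ico,
          Set.mem_Ici, Finset.coe_union, Finset.coe_Ico]
        omega
      rw [genus, hcompl, Set.ncard_coe_finset,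
        Finset.card_union_of_disjoint (by
          rw [Finset.disjoint_left]
          intro x hx hx'
          simp only [Finset.mem_Ico] at *
          omega),
        Nat.card_Ico, Nat.card_Ico]
      omega
    · rw [mult_eq_sInf]
      have hmmem : m ∈ {n | n ∈ ({0} ∪ Set.Ico m c ∪ Set.Ici (2 * m)) ∧ n ≠ 0} := by
        constructor
        · left; right; simp only [Set.mem_Ico]; omega
        · omega
      apply le_antisymm (Nat.sInf_le hmmem)
      apply le_csInf ⟨m, hmmem⟩
      rintro n ⟨hn, hn0⟩
      rcases hn with (hn | hn) | hn <;>
        simp only [Set.mem_singleton_iff, Set.mem_Ico, Set.mem_Ici] at hn <;> omega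
    · rw [frob]
      have hne : (({0} ∪ Set.Ico m c ∪ Set.Ici (2 * m))ᶜ).Nonempty := by
        refine ⟨1, ?_⟩
        simp only [Set.mem_compl_iff, Set.mem_union, Set.mem_singleton_iff, Set.mem_Ico,
          Set.mem_Ici, not_or]
        omega
      have hbd : ∀ x ∈ ({0} ∪ Set.Ico m c ∪ Set.Ici (2 * m))ᶜ, x ≤ 2 * m - 1 := by
        intro x hx
        simp only [Set.mem_compl_iff, Set.mem_union, Set.mem_singleton_iff, Set.mem_Ico,
          Set.mem_Ici, not_or] at hx
        omega
      have := csSup_le hne hbd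
      omega
end

section
/- Fix positive integers g, m, l with l < m, and let C(g,m,l) be the set of numerical semigroups with genus g, multiplicity m, and Frobenius number 2m + l. For S ∈ C(g,m,l) define χ(S) = (S ∩ [m, m+l], S ∩ [2m, 2m+l]). If (A₁, A₂) lies in the image of χ, then the preimage of (A₁, A₂) under χ is in bijection with the subsets B ⊆ {1, ..., m-l-1} of size 2m - g + l - |A₁| - |A₂|, via B ↦ S_B = {0} ∪ A₁ ∪ (m + l + B) ∪ A₂ ∪ {n : n ≥ 2m + l + 1}. -/
/-- The pair of "initial segments" used to classify depth-3 numerical semigroups. -/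
def chi (m l : ℕ) (S : Set ℕ) : Set ℕ × Set ℕ :=
  (S ∩ Set.Icc m (m + l), S ∩ Set.Icc (2 * m) (2 * m + l))

/-! ### Auxiliary lemmas -/

def fSB (m l : ℕ) (A₁ A₂ : Set ℕ) (B : Finset ℕ) : Set ℕ :=
  ({0} : Set ℕ) ∪ A₁ ∪ (fun b => m + l + b) '' (↑B) ∪ A₂ ∪ {n | 2 * m + l + 1 ≤ n}

lemma mem_fSB {m l : ℕ} {A₁ A₂ : Set ℕ} {B : Finset ℕ} {n : ℕ} :
    n ∈ fSB m l A₁ A₂ B ↔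
      n = 0 ∨ n ∈ A₁ ∨ (∃ b ∈ B, m + l + b = n) ∨ n ∈ A₂ ∨ 2 * m + l + 1 ≤ n := by
  simp [fSB, Set.mem_union, Set.mem_image, or_assoc]

lemma genus_add {S : Set ℕ} {N : ℕ} (h : Sᶜ ⊆ Set.Iio N) :
    genus S + (S ∩ Set.Iio N).ncard = N := by
  have hfc : Sᶜ.Finite := (Set.finite_Iio N).subset h
  have hfi : (S ∩ Set.Iio N).Finite := (Set.finite_Iio N).subset Set.inter_subset_right
  have hdisj : Disjoint Sᶜ (S ∩ Set.Iio N) := by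
    refine Set.disjoint_left.mpr ?_
    rintro x hx ⟨hxS, -⟩; exact hx hxS
  have hun : Sᶜ ∪ (S ∩ Set.Iio N) = Set.Iio N := by
    ext x
    constructor
    · rintro (hx | ⟨-, hx⟩)
      · exact h hx
      · exact hx
    · intro hx
      by_cases hxS : x ∈ S
      · exact Or.inr ⟨hxS, hx⟩
      · exact Or.inl hxS
  have hu := Set.ncard_union_eq hdisj hfc hfi
  rw [hun] at hu
  rw [genus, ← hu, ← Finset.coe_range, Set.ncard_coe_finset, Finset.card_range]

lemma fSB_inter_ncard {m l : ℕ} {A₁ A₂ : Set ℕ} {B : Finset ℕ}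
    (hm : 0 < m) (hlm : l < m)
    (hA1 : A₁ ⊆ Set.Icc m (m + l)) (hA2 : A₂ ⊆ Set.Icc (2 * m) (2 * m + l))
    (hB : ↑B ⊆ Set.Icc 1 (m - l - 1)) :
    (fSB m l A₁ A₂ B ∩ Set.Iio (2 * m + l + 1)).ncard
      = 1 + A₁.ncard + B.card + A₂.ncard := by
  have hImem : ∀ n ∈ (fun b => m + l + b) '' (↑B : Set ℕ),
      m + l + 1 ≤ n ∧ n ≤ 2 * m - 1 := by
    rintro n ⟨b, hb, hbe⟩
    simp only at hbe
    have := hB hb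
    simp only [Set.mem_Icc] at this
    omega
  have hA1f : A₁.Finite := (Set.finite_Icc _ _).subset hA1
  have hA2f : A₂.Finite := (Set.finite_Icc _ _).subset hA2
  have hIf : ((fun b => m + l + b) '' (↑B : Set ℕ)).Finite := B.finite_toSet.image _
  have heq : fSB m l A₁ A₂ B ∩ Set.Iio (2 * m + l + 1)
      = ({0} : Set ℕ) ∪ A₁ ∪ (fun b => m + l + b) '' (↑B) ∪ A₂ := by
    ext n
    simp only [Set.mem_inter_iff, Set.mem_Iio, fSB, Set.mem_union, Set.mem_singleton_iff,
      Set.mem_setOf_eq]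
    constructor
    · rintro ⟨(((h | h) | h) | h) | h, hlt⟩
      · exact Or.inl (Or.inl (Or.inl h))
      · exact Or.inl (Or.inl (Or.inr h))
      · exact Or.inl (Or.inr h)
      · exact Or.inr h
      · omega
    · rintro (((h | h) | h) | h)
      · exact ⟨Or.inl (Or.inl (Or.inl (Or.inl h))), by omega⟩
      · have := hA1 h; simp only [Set.mem_Icc] at this
        exact ⟨Or.inl (Or.inl (Or.inl (Or.inr h))), by omega⟩
      · have := hImem n h
        exact ⟨Or.inl (Or.inl (Or.inr h)), by omega⟩
      · have := hA2 h; simp only [Set.mem_Icc] at this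
        exact ⟨Or.inl (Or.inr h), by omega⟩
  rw [heq]
  have hd1 : Disjoint (({0} : Set ℕ)) A₁ := by
    refine Set.disjoint_left.mpr ?_
    intro x hx hx'
    have := hA1 hx'; simp only [Set.mem_Icc] at this
    simp only [Set.mem_singleton_iff] at hx
    omega
  have hd2 : Disjoint (({0} : Set ℕ) ∪ A₁) ((fun b => m + l + b) '' (↑B : Set ℕ)) := by
    refine Set.disjoint_left.mpr ?_
    rintro x (hx | hx) hx'
    · have := hImem x hx'
      simp only [Set.mem_singleton_iff] at hx
      omega
    · have h1 := hA1 hx; simp only [Set.mem_Icc] at h1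
      have := hImem x hx'
      omega
  have hd3 : Disjoint (({0} : Set ℕ) ∪ A₁ ∪ (fun b => m + l + b) '' (↑B : Set ℕ)) A₂ := by
    refine Set.disjoint_left.mpr ?_
    rintro x ((hx | hx) | hx) hx'
    · have := hA2 hx'; simp only [Set.mem_Icc] at this
      simp only [Set.mem_singleton_iff] at hx
      omega
    · have h1 := hA1 hx; simp only [Set.mem_Icc] at h1
      have := hA2 hx'; simp only [Set.mem_Icc] at this
      omega
    · have := hImem x hx
      have h2 := hA2 hx'; simp only [Set.mem_Icc] at h2
      omega
  rw [Set.ncard_union_eq hd3 (((Set.finite_singleton 0).union hA1f).union hIf) hA2f,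
    Set.ncard_union_eq hd2 ((Set.finite_singleton 0).union hA1f) hIf,
    Set.ncard_union_eq hd1 (Set.finite_singleton 0) hA1f,
    Set.ncard_singleton,
    Set.ncard_image_of_injective _ (fun a b h => by simpa using h : Function.Injective (fun b => m + l + b)),
    Set.ncard_coe_finset]

/-- Facts extracted from a semigroup in the target class. -/
lemma target_facts {m l : ℕ} {S : Set ℕ} (hl : 0 < l) (hlm : l < m)
    (hS : IsNumericalSemigroup S) (hmult : mult S = m) (hfrob : frob S = 2 * m + l) :
    m ∈ S ∧ (∀ n ∈ S, n ≠ 0 → m ≤ n) ∧ 2 * m + l ∉ S ∧ (∀ n, 2 * m + l + 1 ≤ n → n ∈ S) := by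
  obtain ⟨h0, hadd, hfin⟩ := hS
  rw [mult_eq_sInf] at hmult
  have hne : {n | n ∈ S ∧ n ≠ 0}.Nonempty := by
    obtain ⟨M, hM⟩ := hfin.bddAbove
    refine ⟨M + 1, ?_, by omega⟩
    by_contra h
    have := hM h
    omega
  have hmem : m ∈ S ∧ m ≠ 0 := hmult ▸ Nat.sInf_mem hne
  have hlow : ∀ n ∈ S, n ≠ 0 → m ≤ n := fun n hn hn0 => hmult ▸ Nat.sInf_le ⟨hn, hn0⟩
  have htail : ∀ n, 2 * m + l + 1 ≤ n → n ∈ S := by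
    intro n hn
    by_contra h
    have h2 : sSup Sᶜ = 2 * m + l := hfrob
    have := le_csSup hfin.bddAbove (show n ∈ Sᶜ from h)
    omega
  have hco : Sᶜ.Nonempty := by
    refine ⟨1, fun h => ?_⟩
    have := hlow 1 h one_ne_zero
    omega
  have hF : 2 * m + l ∉ S := by
    have h2 : sSup Sᶜ = 2 * m + l := hfrob
    have := hco.csSup_mem hfin
    rw [h2] at this
    exact this
  exact ⟨hmem.1, hlow, hF, htail⟩

lemma fSB_target {g m l : ℕ} {A₁ A₂ : Set ℕ}
    (hm : 0 < m) (hl : 0 < l) (hlm : l < m)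
    (hA1 : A₁ ⊆ Set.Icc m (m + l)) (hmA1 : m ∈ A₁)
    (hA2 : A₂ ⊆ Set.Icc (2 * m) (2 * m + l)) (hF : 2 * m + l ∉ A₂)
    (haddA : ∀ a ∈ A₁, ∀ b ∈ A₁, a + b ≤ 2 * m + l → a + b ∈ A₂)
    {B : Finset ℕ} (hB : ↑B ⊆ Set.Icc 1 (m - l - 1))
    (hcard : B.card + A₁.ncard + A₂.ncard + g = 2 * m + l) :
    IsNumericalSemigroup (fSB m l A₁ A₂ B) ∧ genus (fSB m l A₁ A₂ B) = g ∧
      mult (fSB m l A₁ A₂ B) = m ∧ frob (fSB m l A₁ A₂ B) = 2 * m + l ∧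
      chi m l (fSB m l A₁ A₂ B) = (A₁, A₂) := by
  set S := fSB m l A₁ A₂ B with hSdef
  have hBmem : ∀ b ∈ B, 1 ≤ b ∧ b ≤ m - l - 1 := by
    intro b hb
    have := hB hb; simp only [Set.mem_Icc] at this; exact this
  -- classification of elements
  have hclass : ∀ n ∈ S, n = 0 ∨ (m ≤ n ∧ n ≤ m + l ∧ n ∈ A₁) ∨
      (m + l + 1 ≤ n ∧ n ≤ 2 * m - 1) ∨
      (2 * m ≤ n ∧ n ≤ 2 * m + l ∧ n ∈ A₂) ∨ 2 * m + l + 1 ≤ n := by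
    intro n hn
    rcases mem_fSB.mp hn with h | h | ⟨b, hb, rfl⟩ | h | h
    · exact Or.inl h
    · have := hA1 h; simp only [Set.mem_Icc] at this
      exact Or.inr (Or.inl ⟨this.1, this.2, h⟩)
    · have := hBmem b hb
      exact Or.inr (Or.inr (Or.inl (by omega)))
    · have := hA2 h; simp only [Set.mem_Icc] at this
      exact Or.inr (Or.inr (Or.inr (Or.inl ⟨this.1, this.2, h⟩)))
    · exact Or.inr (Or.inr (Or.inr (Or.inr h)))
  have hlow : ∀ n ∈ S, n ≠ 0 → m ≤ n := by
    intro n hn hn0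
    rcases hclass n hn with h | h | h | h | h <;> omega
  have h0S : 0 ∈ S := mem_fSB.mpr (Or.inl rfl)
  have htail : ∀ n, 2 * m + l + 1 ≤ n → n ∈ S := fun n hn =>
    mem_fSB.mpr (Or.inr (Or.inr (Or.inr (Or.inr hn))))
  have hmS : m ∈ S := mem_fSB.mpr (Or.inr (Or.inl hmA1))
  have hA1S : A₁ ⊆ S := fun x hx => mem_fSB.mpr (Or.inr (Or.inl hx))
  have hA2S : A₂ ⊆ S := fun x hx => mem_fSB.mpr (Or.inr (Or.inr (Or.inr (Or.inl hx))))
  have hFS : 2 * m + l ∉ S := by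
    intro h
    rcases hclass _ h with h | h | h | h | h <;> first | omega | exact hF h.2.2
  have hcsub : Sᶜ ⊆ Set.Iio (2 * m + l + 1) := by
    intro n hn
    simp only [Set.mem_compl_iff] at hn
    simp only [Set.mem_Iio]
    by_contra h
    exact hn (htail n (by omega))
  have hfin : Sᶜ.Finite := (Set.finite_Iio _).subset hcsub
  -- semigroup
  have hNS : IsNumericalSemigroup S := by
    refine ⟨h0S, ?_, hfin⟩
    intro a ha b hb
    rcases Nat.eq_zero_or_pos a with rfl | ha0
    · simpa using hb
    rcases Nat.eq_zero_or_pos b with rfl | hb0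
    · simpa using ha
    by_cases hbig : 2 * m + l + 1 ≤ a + b
    · exact htail _ hbig
    have hma := hlow a ha (by omega)
    have hmb := hlow b hb (by omega)
    have ha1 : a ∈ A₁ := by
      rcases hclass a ha with h | h | h | h | h <;> first | omega | exact h.2.2
    have hb1 : b ∈ A₁ := by
      rcases hclass b hb with h | h | h | h | h <;> first | omega | exact h.2.2
    exact hA2S (haddA a ha1 b hb1 (by omega))
  -- genus
  have hgen : genus S = g := by
    have h1 := genus_add hcsub
    have h2 := fSB_inter_ncard hm hlm hA1 hA2 hB
    rw [← hSdef] at h2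
    omega
  -- mult
  have hmult : mult S = m := by
    rw [mult_eq_sInf]
    refine le_antisymm (Nat.sInf_le ⟨hmS, by omega⟩) ?_
    refine le_csInf ⟨m, hmS, by omega⟩ ?_
    rintro n ⟨hn, hn0⟩
    exact hlow n hn hn0
  -- frob
  have hfrob : frob S = 2 * m + l := by
    rw [frob]
    refine le_antisymm (csSup_le ⟨2 * m + l, hFS⟩ ?_) (le_csSup hfin.bddAbove hFS)
    intro x hx
    by_contra h
    exact hx (htail x (by omega))
  -- chi
  have hchi : chi m l S = (A₁, A₂) := by
    rw [chi, Prod.mk.injEq]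
    constructor
    · ext n
      simp only [Set.mem_inter_iff, Set.mem_Icc]
      constructor
      · rintro ⟨hn, h1, h2⟩
        rcases hclass n hn with h | h | h | h | h <;> first | omega | exact h.2.2
      · intro h
        have := hA1 h; simp only [Set.mem_Icc] at this
        exact ⟨hA1S h, this⟩
    · ext n
      simp only [Set.mem_inter_iff, Set.mem_Icc]
      constructor
      · rintro ⟨hn, h1, h2⟩
        rcases hclass n hn with h | h | h | h | h <;> first | omega | exact h.2.2
      · intro h
        have := hA2 h; simp only [Set.mem_Icc] at this
        exact ⟨hA2S h, this⟩
  exact ⟨hNS, hgen, hmult, hfrob, hchi⟩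

theorem stmt5 (g m l : ℕ) (hg : 0 < g) (hm : 0 < m) (hl : 0 < l) (hlm : l < m)
    (A₁ A₂ : Set ℕ)
    (hex : ∃ S₀ : Set ℕ, IsNumericalSemigroup S₀ ∧ genus S₀ = g ∧ mult S₀ = m ∧
      frob S₀ = 2 * m + l ∧ chi m l S₀ = (A₁, A₂)) :
    Set.BijOn
      (fun B : Finset ℕ =>
        ({0} : Set ℕ) ∪ A₁ ∪ (fun b => m + l + b) '' (↑B) ∪ A₂ ∪ {n | 2 * m + l + 1 ≤ n})
      {B : Finset ℕ | ↑B ⊆ Set.Icc 1 (m - l - 1) ∧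
        B.card + A₁.ncard + A₂.ncard + g = 2 * m + l}
      {S : Set ℕ | IsNumericalSemigroup S ∧ genus S = g ∧ mult S = m ∧
        frob S = 2 * m + l ∧ chi m l S = (A₁, A₂)} := by
  classical
  obtain ⟨T, hT, hTg, hTm, hTf, hTchi⟩ := hex
  obtain ⟨hmT, hlowT, hFT, htailT⟩ := target_facts hl hlm hT hTm hTf
  rw [chi, Prod.mk.injEq] at hTchi
  obtain ⟨hc1, hc2⟩ := hTchi
  have hA1 : A₁ ⊆ Set.Icc m (m + l) := hc1 ▸ Set.inter_subset_right
  have hA2 : A₂ ⊆ Set.Icc (2 * m) (2 * m + l) := hc2 ▸ Set.inter_subset_right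
  have hmA1 : m ∈ A₁ := hc1 ▸ ⟨hmT, Set.mem_Icc.mpr ⟨le_rfl, by omega⟩⟩
  have hF : 2 * m + l ∉ A₂ := fun h => hFT (hc2 ▸ h).1
  have haddA : ∀ a ∈ A₁, ∀ b ∈ A₁, a + b ≤ 2 * m + l → a + b ∈ A₂ := by
    intro a ha b hb hab
    have haT : a ∈ T := (hc1 ▸ ha).1
    have hbT : b ∈ T := (hc1 ▸ hb).1
    have ha' := hA1 ha; have hb' := hA1 hb
    simp only [Set.mem_Icc] at ha' hb'
    have : a + b ∈ T := hT.2.1 a haT b hbT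
    exact hc2 ▸ ⟨this, by simp only [Set.mem_Icc]; omega⟩
  constructor
  · -- MapsTo
    rintro B ⟨hBsub, hcard⟩
    exact fSB_target hm hl hlm hA1 hmA1 hA2 hF haddA hBsub hcard
  constructor
  · -- InjOn
    rintro B₁ ⟨h1, -⟩ B₂ ⟨h2, -⟩ heq
    simp only at heq
    ext b
    constructor
    · intro hb
      have hmemb : (m + l + b) ∈ fSB m l A₁ A₂ B₂ := by
        rw [show fSB m l A₁ A₂ B₂ = fSB m l A₁ A₂ B₁ from heq.symm]
        exact mem_fSB.mpr (Or.inr (Or.inr (Or.inl ⟨b, hb, rfl⟩)))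
      have hbb := h1 hb; simp only [Finset.coe_subset, Set.mem_Icc] at hbb
      have hbb' : 1 ≤ b ∧ b ≤ m - l - 1 := by
        have := h1 hb; simpa using this
      rcases mem_fSB.mp hmemb with h | h | ⟨b', hb', he⟩ | h | h
      · omega
      · have := hA1 h; simp only [Set.mem_Icc] at this; omega
      · have : b' = b := by omega
        exact this ▸ hb'
      · have := hA2 h; simp only [Set.mem_Icc] at this; omega
      · omega
    · intro hb
      have hmemb : (m + l + b) ∈ fSB m l A₁ A₂ B₁ := by
        rw [show fSB m l A₁ A₂ B₁ = fSB m l A₁ A₂ B₂ from heq]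
        exact mem_fSB.mpr (Or.inr (Or.inr (Or.inl ⟨b, hb, rfl⟩)))
      have hbb' : 1 ≤ b ∧ b ≤ m - l - 1 := by
        have := h2 hb; simpa using this
      rcases mem_fSB.mp hmemb with h | h | ⟨b', hb', he⟩ | h | h
      · omega
      · have := hA1 h; simp only [Set.mem_Icc] at this; omega
      · have : b' = b := by omega
        exact this ▸ hb'
      · have := hA2 h; simp only [Set.mem_Icc] at this; omega
      · omega
  · -- SurjOn
    rintro S ⟨hS, hgen, hmult, hfrob, hchi⟩
    obtain ⟨hmS, hlowS, hFS, htailS⟩ := target_facts hl hlm hS hmult hfrob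
    rw [chi, Prod.mk.injEq] at hchi
    obtain ⟨hs1, hs2⟩ := hchi
    set B : Finset ℕ := (Finset.Icc 1 (m - l - 1)).filter (fun b => m + l + b ∈ S) with hBdef
    have hBsub : ↑B ⊆ Set.Icc 1 (m - l - 1) := by
      intro b hb
      simp only [hBdef, Finset.coe_filter, Set.mem_setOf_eq, Finset.mem_Icc] at hb
      simp only [Set.mem_Icc]
      omega
    have hfeq : fSB m l A₁ A₂ B = S := by
      ext n
      rw [mem_fSB]
      constructor
      · rintro (h | h | ⟨b, hb, rfl⟩ | h | h)
        · exact h ▸ hS.1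
        · exact (hs1 ▸ h).1
        · simp only [hBdef, Finset.mem_filter] at hb
          exact hb.2
        · exact (hs2 ▸ h).1
        · exact htailS n h
      · intro hn
        by_cases hn0 : n = 0
        · exact Or.inl hn0
        have hmn := hlowS n hn hn0
        by_cases h1 : n ≤ m + l
        · exact Or.inr (Or.inl (hs1 ▸ ⟨hn, by simp only [Set.mem_Icc]; omega⟩))
        by_cases h2 : n ≤ 2 * m - 1
        · refine Or.inr (Or.inr (Or.inl ⟨n - (m + l), ?_, by omega⟩))
          simp only [hBdef, Finset.mem_filter, Finset.mem_Icc]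
          exact ⟨⟨by omega, by omega⟩, by rwa [show m + l + (n - (m + l)) = n by omega]⟩
        by_cases h3 : n ≤ 2 * m + l
        · exact Or.inr (Or.inr (Or.inr (Or.inl (hs2 ▸ ⟨hn, by simp only [Set.mem_Icc]; omega⟩))))
        · exact Or.inr (Or.inr (Or.inr (Or.inr (by omega))))
    have hA1' : A₁ ⊆ Set.Icc m (m + l) := hs1 ▸ Set.inter_subset_right
    have hA2' : A₂ ⊆ Set.Icc (2 * m) (2 * m + l) := hs2 ▸ Set.inter_subset_right
    have hcsub : Sᶜ ⊆ Set.Iio (2 * m + l + 1) := by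
      intro x hx
      simp only [Set.mem_compl_iff] at hx
      simp only [Set.mem_Iio]
      by_contra h
      exact hx (htailS x (by omega))
    have hgadd := genus_add hcsub
    have hncard := fSB_inter_ncard hm hlm hA1' hA2' hBsub
    rw [hfeq] at hncard
    have hcard : B.card + A₁.ncard + A₂.ncard + g = 2 * m + l := by omega
    exact ⟨B, ⟨hBsub, hcard⟩, hfeq⟩
end

section
/- Fix positive integers g, m, l with l < m, and suppose (A₁, A₂) = (S₀ ∩ [m, m+l], S₀ ∩ [2m, 2m+l]) for some numerical semigroup S₀ with genus g, multiplicity m, and Frobenius number 2m + l. Then for any subset B ⊆ {1, ..., m-l-1}, the set S_B = {0} ∪ A₁ ∪ (m + l + B) ∪ A₂ ∪ {n : n ≥ 2m + l + 1} is closed under addition (hence a numerical semigroup). -/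
theorem stmt6 (g m l : ℕ) (hg : 0 < g) (hm : 0 < m) (hl : 0 < l) (hlm : l < m)
    (A₁ A₂ : Set ℕ)
    (hex : ∃ S₀ : Set ℕ, IsNumericalSemigroup S₀ ∧ genus S₀ = g ∧ mult S₀ = m ∧
      frob S₀ = 2 * m + l ∧ chi m l S₀ = (A₁, A₂))
    (B : Set ℕ) (hB : B ⊆ Set.Icc 1 (m - l - 1))
    (T : Set ℕ)
    (hT : T = ({0} : Set ℕ) ∪ A₁ ∪ (fun b => m + l + b) '' B ∪ A₂ ∪ {n | 2 * m + l + 1 ≤ n}) :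
    ∀ x ∈ T, ∀ y ∈ T, x + y ∈ T := by
  obtain ⟨S₀, ⟨h0, hadd, hfin⟩, -, -, -, hchi⟩ := hex
  have hA1 : A₁ = S₀ ∩ Set.Icc m (m + l) := by
    have := congrArg Prod.fst hchi
    simpa [chi] using this.symm
  have hA2 : A₂ = S₀ ∩ Set.Icc (2 * m) (2 * m + l) := by
    have := congrArg Prod.snd hchi
    simpa [chi] using this.symm
  have key : ∀ z ∈ T, z = 0 ∨ z ∈ S₀ ∩ Set.Icc m (m + l) ∨ m + l + 1 ≤ z := by
    intro z hz
    rw [hT] at hz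
    rcases hz with ((((hz | hz) | hz) | hz) | hz)
    · exact Or.inl hz
    · rw [hA1] at hz; exact Or.inr (Or.inl hz)
    · obtain ⟨b, hb, rfl⟩ := hz
      have := hB hb
      right; right; simp at this ⊢; omega
    · rw [hA2] at hz
      have := hz.2.1
      right; right; omega
    · right; right; simp only [Set.mem_setOf_eq] at hz; omega
  intro x hx y hy
  rcases key x hx with rfl | hx' | hx'
  · simpa using hy
  · rcases key y hy with rfl | hy' | hy'
    · simpa using hx
    · -- both in A₁
      have hs : x + y ∈ S₀ := hadd x hx'.1 y hy'.1
      have hx1 := hx'.2.1; have hx2 := hx'.2.2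
      have hy1 := hy'.2.1; have hy2 := hy'.2.2
      rw [hT]
      by_cases hc : x + y ≤ 2 * m + l
      · left; right
        rw [hA2]
        exact ⟨hs, by omega, hc⟩
      · right; simp only [Set.mem_setOf_eq]; omega
    · -- y large
      have hx1 := hx'.2.1
      rw [hT]; right; simp only [Set.mem_setOf_eq]; omega
  · rcases key y hy with rfl | hy' | hy'
    · simpa using hx
    · have hy1 := hy'.2.1
      rw [hT]; right; simp only [Set.mem_setOf_eq]; omega
    · rw [hT]; right; simp only [Set.mem_setOf_eq]; omega
end

section
/- Let F and g be positive integers with F < 2g. The set B_Frob(F, g) of numerical semigroups with Frobenius number F, genus g, and F < 2·m(S) is in bijection with the subsets B ⊆ {1, ..., ⌊(F-1)/2⌋} of size F - g, via B ↦ S_{F,B} = (⌊F/2⌋ + B) ∪ {0} ∪ {n : n ≥ F + 1}. -/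
theorem stmt7 (F g : ℕ) (hF : 0 < F) (hg : 0 < g) (hFg : F < 2 * g) :
    Set.BijOn
      (fun B : Finset ℕ => (fun b => F / 2 + b) '' (↑B) ∪ ({0} : Set ℕ) ∪ {n | F + 1 ≤ n})
      {B : Finset ℕ | ↑B ⊆ Set.Icc 1 ((F - 1) / 2) ∧ B.card + g = F}
      {S : Set ℕ | IsNumericalSemigroup S ∧ frob S = F ∧ genus S = g ∧ F < 2 * mult S} := by
  classical
  refine ⟨?_, ?_, ?_⟩
  · -- MapsTo
    rintro B ⟨hBsub, hBcard⟩
    set S : Set ℕ := (fun b => F / 2 + b) '' (↑B) ∪ ({0} : Set ℕ) ∪ {n | F + 1 ≤ n} with hSdef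
    have hmemS : ∀ n, n ∈ S ↔ ((∃ b ∈ B, F / 2 + b = n) ∨ n = 0 ∨ F + 1 ≤ n) := by
      intro n
      constructor
      · rintro ((⟨b, hb, rfl⟩ | h) | h)
        · exact Or.inl ⟨b, hb, rfl⟩
        · exact Or.inr (Or.inl h)
        · exact Or.inr (Or.inr h)
      · rintro (⟨b, hb, rfl⟩ | rfl | h)
        · exact Or.inl (Or.inl ⟨b, hb, rfl⟩)
        · exact Or.inl (Or.inr rfl)
        · exact Or.inr h
    have hBb : ∀ b ∈ B, 1 ≤ b ∧ b ≤ (F - 1) / 2 := by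
      intro b hb
      have := hBsub hb
      simpa [Set.mem_Icc] using this
    have hel : ∀ n ∈ S, n = 0 ∨ F / 2 + 1 ≤ n := by
      intro n hn
      rw [hmemS] at hn
      rcases hn with ⟨b, hb, rfl⟩ | h | h
      · refine Or.inr ?_
        show F / 2 + 1 ≤ F / 2 + b
        have := hBb b hb
        omega
      · left; exact h
      · right; omega
    have hco : Sᶜ = ↑((Finset.Icc 1 F) \ B.image (fun b => F / 2 + b)) := by
      ext n
      simp only [Set.mem_compl_iff, hmemS, Finset.coe_sdiff, Set.mem_diff, Finset.coe_image,
        Finset.coe_Icc, Set.mem_Icc, Set.mem_image, Finset.mem_coe]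
      constructor
      · intro h
        push_neg at h
        obtain ⟨h1, h2, h3⟩ := h
        refine ⟨⟨by omega, by omega⟩, ?_⟩
        rintro ⟨b, hb, he⟩
        exact absurd he (h1 b hb)
      · rintro ⟨⟨h1, h2⟩, h3⟩
        push_neg
        refine ⟨fun b hb he => h3 ⟨b, hb, he⟩, by omega, by omega⟩
    have hfin : Sᶜ.Finite := by rw [hco]; exact Finset.finite_toSet _
    have himgsub : B.image (fun b => F / 2 + b) ⊆ Finset.Icc 1 F := by
      intro x hx
      simp only [Finset.mem_image] at hx
      obtain ⟨b, hb, rfl⟩ := hx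
      have := hBb b hb
      simp only [Finset.mem_Icc]
      omega
    have hinj : Function.Injective (fun b : ℕ => F / 2 + b) := add_right_injective (F / 2)
    have hcard : ((Finset.Icc 1 F) \ B.image (fun b => F / 2 + b)).card = F - B.card := by
      rw [Finset.card_sdiff_of_subset himgsub, Finset.card_image_of_injective _ hinj, Nat.card_Icc]
      omega
    have hgenus : genus S = g := by
      rw [genus, hco, Set.ncard_coe_finset, hcard]
      omega
    have hFc : F ∈ Sᶜ := by
      simp only [Set.mem_compl_iff, hmemS]
      push_neg
      refine ⟨fun b hb he => ?_, by omega, by omega⟩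
      have := hBb b hb
      omega
    have hfrob : frob S = F := by
      rw [frob]
      apply le_antisymm
      · apply csSup_le ⟨F, hFc⟩
        intro n hn
        simp only [Set.mem_compl_iff, hmemS] at hn
        push_neg at hn
        omega
      · exact le_csSup hfin.bddAbove hFc
    refine ⟨⟨?_, ?_, hfin⟩, hfrob, hgenus, ?_⟩
    · rw [hmemS]; right; left; rfl
    · intro a ha b hb
      rcases hel a ha with rfl | ha2
      · simpa using hb
      rcases hel b hb with rfl | hb2
      · simpa using ha
      rw [hmemS]
      right; right
      omega
    · show F < 2 * mult S
      rw [mult_eq_sInf]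
      have hmem : F + 1 ∈ {n | n ∈ S ∧ n ≠ 0} := by
        refine ⟨?_, by omega⟩
        rw [hmemS]; right; right; omega
      have h1 := Nat.sInf_mem ⟨F + 1, hmem⟩
      have h2 := hel _ h1.1
      rcases h2 with h2 | h2
      · exact absurd h2 h1.2
      · omega
  · -- InjOn
    have hmono : ∀ (B B' : Finset ℕ), ↑B ⊆ Set.Icc 1 ((F - 1) / 2) →
        ((fun b => F / 2 + b) '' (↑B) ∪ ({0} : Set ℕ) ∪ {n | F + 1 ≤ n}) ⊆
        ((fun b => F / 2 + b) '' (↑B') ∪ ({0} : Set ℕ) ∪ {n | F + 1 ≤ n}) → B ⊆ B' := by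
      intro B B' hBsub h
      intro b hb
      have hbb : 1 ≤ b ∧ b ≤ (F - 1) / 2 := by
        have := hBsub hb; simpa [Set.mem_Icc] using this
      have hmem : F / 2 + b ∈ ((fun b => F / 2 + b) '' (↑B') ∪ ({0} : Set ℕ) ∪ {n | F + 1 ≤ n}) :=
        h (Or.inl (Or.inl ⟨b, hb, rfl⟩))
      rcases hmem with (⟨b', hb', he⟩ | h0) | hbig
      · simp only at he
        have : b' = b := by omega
        rwa [← this]
      · simp only [Set.mem_singleton_iff] at h0; omega
      · simp only [Set.mem_setOf_eq] at hbig; omega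
    rintro B ⟨hB, _⟩ B' ⟨hB', _⟩ h
    exact Finset.Subset.antisymm (hmono B B' hB h.le) (hmono B' B hB' h.ge)
  · -- SurjOn
    rintro S ⟨⟨h0, hadd, hfin⟩, hfrob, hgen, hmult⟩
    have hne : Sᶜ.Nonempty := by
      rcases Set.eq_empty_or_nonempty Sᶜ with h | h
      · rw [genus, h] at hgen; simp at hgen; omega
      · exact h
    have hFc : F ∉ S := by
      have : sSup Sᶜ ∈ Sᶜ := hne.csSup_mem hfin
      rw [frob] at hfrob
      rw [← hfrob]
      exact this
    have hgt : ∀ n, F < n → n ∈ S := by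
      intro n hn
      by_contra hns
      have : n ≤ sSup Sᶜ := le_csSup hfin.bddAbove hns
      rw [frob] at hfrob
      omega
    have hmS := Nat.sInf_mem (⟨F + 1, hgt _ (by omega), by omega⟩ :
      {n | n ∈ S ∧ n ≠ 0}.Nonempty)
    rw [← mult_eq_sInf] at hmS
    have hmin : ∀ s ∈ S, s ≠ 0 → mult S ≤ s := by
      intro s hs hs0
      rw [mult_eq_sInf]
      exact Nat.sInf_le ⟨hs, hs0⟩
    have hlow : ∀ s ∈ S, s ≠ 0 → F / 2 + 1 ≤ s := by
      intro s hs hs0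
      have := hmin s hs hs0
      omega
    refine ⟨Finset.filter (fun b => F / 2 + b ∈ S) (Finset.Icc 1 ((F - 1) / 2)), ⟨?_, ?_⟩, ?_⟩
    · intro b hb
      simp only [Finset.coe_filter, Set.mem_setOf_eq, Finset.mem_Icc] at hb
      simp [Set.mem_Icc]
      omega
    · -- card
      have hcoS : Sᶜ = ↑((Finset.Icc 1 F).filter (fun n => n ∉ S)) := by
        ext n
        simp only [Set.mem_compl_iff, Finset.coe_filter, Set.mem_setOf_eq, Finset.mem_Icc]
        constructor
        · intro h
          refine ⟨⟨?_, ?_⟩, h⟩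
          · rcases Nat.eq_zero_or_pos n with rfl | h1
            · exact absurd h0 h
            · omega
          · by_contra hc
            exact h (hgt n (by omega))
        · tauto
      have hgcard : g = ((Finset.Icc 1 F).filter (fun n => n ∉ S)).card := by
        rw [← hgen, genus, hcoS, Set.ncard_coe_finset]
      have hsum := Finset.card_filter_add_card_filter_not
        (s := Finset.Icc 1 F) (p := fun n => n ∈ S)
      rw [Nat.card_Icc] at hsum
      have himg : (Finset.filter (fun b => F / 2 + b ∈ S) (Finset.Icc 1 ((F - 1) / 2))).image
          (fun b => F / 2 + b) = (Finset.Icc 1 F).filter (fun n => n ∈ S) := by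
        ext t
        simp only [Finset.mem_image, Finset.mem_filter, Finset.mem_Icc]
        constructor
        · rintro ⟨b, ⟨⟨hb1, hb2⟩, hbS⟩, rfl⟩
          exact ⟨⟨by omega, by omega⟩, hbS⟩
        · rintro ⟨⟨ht1, ht2⟩, htS⟩
          have h1 : F / 2 + 1 ≤ t := hlow t htS (by omega)
          have h2 : t ≠ F := fun h => hFc (h ▸ htS)
          refine ⟨t - F / 2, ⟨⟨by omega, by omega⟩, ?_⟩, by omega⟩
          have : F / 2 + (t - F / 2) = t := by omega
          rwa [this]
      have hcardeq : (Finset.filter (fun b => F / 2 + b ∈ S) (Finset.Icc 1 ((F - 1) / 2))).card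
          = ((Finset.Icc 1 F).filter (fun n => n ∈ S)).card := by
        rw [← himg, Finset.card_image_of_injective _ (add_right_injective (F / 2))]
      omega
    · -- image equals S
      ext n
      simp only [Set.mem_union, Set.mem_image, Finset.mem_coe, Finset.mem_filter,
        Finset.mem_Icc, Set.mem_singleton_iff, Set.mem_setOf_eq]
      constructor
      · rintro ((⟨b, ⟨⟨hb1, hb2⟩, hbS⟩, rfl⟩ | rfl) | hn)
        · exact hbS
        · exact h0
        · exact hgt n (by omega)
      · intro hn
        rcases Nat.eq_zero_or_pos n with rfl | hn1
        · left; right; rfl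
        rcases le_or_gt n F with hnF | hnF
        · left; left
          have h1 : F / 2 + 1 ≤ n := hlow n hn (by omega)
          have h2 : n ≠ F := fun h => hFc (h ▸ hn)
          refine ⟨n - F / 2, ⟨⟨by omega, by omega⟩, ?_⟩, by omega⟩
          have : F / 2 + (n - F / 2) = n := by omega
          rwa [this]
        · right; omega
end

section
/- Let g, m be positive integers with g/2 + 1 ≤ m ≤ g + 1, and let 1 ≤ k ≤ 2m - g - 2. Over the uniform distribution on numerical semigroups S with genus g, multiplicity m, and F(S) < 2m, the expected value of a_{k+1}(S) equals m + mk/(2m - g - 1). -/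
/-!
A numerical semigroup `S` with multiplicity `m` and `F(S) < 2m` is determined by the set `B` of
`b ∈ [1, m-1]` with `m + b ∈ S`; it has genus `2m - 2 - |B|`, and every such `B` occurs. So the
semigroups in question correspond to the `r`-subsets of `[1, m-1]`, `r = 2m - g - 2`, and
`a_{k+1}(S)` is `m` plus the `k`-th smallest element of `{0} ∪ B`. Over all `r`-subsets of
`[1, n]`, the `j`-th smallest element of `{0} ∪ B` sums to `j * C(n+1, r+1)` (induction on `n`,
according to whether `n ∈ B`), and `m * C(m-1, r) = (r+1) * C(m, r+1)` turns the average into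
`m + m k / (r + 1)`.
-/

open Finset Nat

section NthFinset

lemma Nat.count_congr_of_lt {p q : ℕ → Prop} [DecidablePred p] [DecidablePred q] {n : ℕ}
    (h : ∀ k < n, p k ↔ q k) : count p n = count q n := by
  simp only [count_eq_card_filter_range]
  exact congrArg card (filter_congr fun k hk => h k (mem_range.1 hk))

lemma Nat.nth_eq_of_count_eq {p : ℕ → Prop} [DecidablePred p] {x j : ℕ} (hx : p x)
    (h : count p x = j) : nth p j = x :=
  h ▸ nth_count hx

variable {A : Finset ℕ} {j n : ℕ}

lemma Finset.nth_mem_of_lt_card (hj : j < #A) : nth (· ∈ A) j ∈ A :=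
  Nat.nth_mem j fun _ => by simpa using hj

lemma Finset.count_nth_of_lt_card (hj : j < #A) : count (· ∈ A) (nth (· ∈ A) j) = j :=
  Nat.count_nth fun _ => by simpa using hj

lemma Finset.count_eq_card_of_forall_lt (hA : ∀ a ∈ A, a < n) : count (· ∈ A) n = #A := by
  rw [count_eq_card_filter_range, filter_mem_eq_inter, inter_eq_right.2]
  exact fun a ha => mem_range.2 (hA a ha)

lemma Finset.count_insert_of_le {x : ℕ} (hx : x ≤ n) :
    count (· ∈ insert n A) x = count (· ∈ A) x :=
  count_congr_of_lt fun k hk => by simp [(show k ≠ n by omega)]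

lemma Finset.nth_insert_of_lt_card (hA : ∀ a ∈ A, a < n) (hj : j < #A) :
    nth (· ∈ insert n A) j = nth (· ∈ A) j := by
  have ha := Finset.nth_mem_of_lt_card hj
  refine nth_eq_of_count_eq (mem_insert_of_mem ha) ?_
  rw [count_insert_of_le (hA _ ha).le, Finset.count_nth_of_lt_card hj]

lemma Finset.nth_insert_card (hA : ∀ a ∈ A, a < n) : nth (· ∈ insert n A) #A = n :=
  nth_eq_of_count_eq (mem_insert_self n A) <| by
    rw [count_insert_of_le le_rfl, count_eq_card_of_forall_lt hA]

end NthFinset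

lemma Finset.sum_powersetCard_succ_insert {α β : Type*} [DecidableEq α] [AddCommMonoid β]
    {a : α} {s : Finset α} (ha : a ∉ s) (n : ℕ) (f : Finset α → β) :
    ∑ t ∈ (insert a s).powersetCard (n + 1), f t =
      ∑ t ∈ s.powersetCard (n + 1), f t + ∑ t ∈ s.powersetCard n, f (insert a t) := by
  rw [powersetCard_succ_insert ha, sum_union, sum_image]
  · exact insert_erase_invOn.2.injOn.mono fun t ht ↦ notMem_mono (mem_powersetCard.1 ht).1 ha
  · aesop (add simp [disjoint_left, insert_subset_iff])

lemma Finset.forall_mem_insert_zero_le {B : Finset ℕ} {n : ℕ} (hB : B ⊆ Icc 1 n) :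
    ∀ a ∈ insert 0 B, a ≤ n := by
  intro a ha
  rcases mem_insert.1 ha with rfl | ha
  · exact zero_le n
  · exact (mem_Icc.1 (hB ha)).2

lemma Finset.card_insert_zero_of_subset_Icc {B : Finset ℕ} {n : ℕ} (hB : B ⊆ Icc 1 n) :
    #(insert 0 B) = #B + 1 :=
  card_insert_of_notMem fun h => by simpa using hB h

theorem sum_nth_insert_zero_powersetCard_Icc (n r j : ℕ) (hj : j ≤ r) :
    ∑ B ∈ (Icc 1 n).powersetCard r, nth (· ∈ insert 0 B) j = j * (n + 1).choose (r + 1) := by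
  rcases j.eq_zero_or_pos with rfl | hj0
  · simp [nth_zero_of_zero]
  induction n generalizing r j with
  | zero =>
    rw [powersetCard_eq_empty.2 (by rw [card_Icc]; omega), choose_eq_zero_of_lt (by omega)]
    simp
  | succ n ih =>
    obtain ⟨r, rfl⟩ : ∃ r', r = r' + 1 := ⟨r - 1, by omega⟩
    have hbound : ∀ B ∈ (Icc 1 n).powersetCard r, ∀ a ∈ insert 0 B, a < n + 1 :=
      fun B hB a ha => lt_succ_of_le (forall_mem_insert_zero_le (mem_powersetCard.1 hB).1 a ha)
    have hcard : ∀ B ∈ (Icc 1 n).powersetCard r, #(insert 0 B) = r + 1 := fun B hB => by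
      rw [card_insert_zero_of_subset_Icc (mem_powersetCard.1 hB).1, (mem_powersetCard.1 hB).2]
    rw [← insert_Icc_right_eq_Icc_add_one (by omega),
      sum_powersetCard_succ_insert (by simp), ih _ _ hj hj0, choose_succ_succ' (n + 1) (r + 1)]
    simp_rw [insert_comm 0 (n + 1)]
    rcases hj.lt_or_eq with hj | rfl
    · rw [sum_congr rfl fun B hB => nth_insert_of_lt_card (hbound B hB) (hcard B hB ▸ hj),
        ih _ _ (by omega) hj0]
      ring
    · rw [sum_congr rfl fun B hB => hcard B hB ▸ nth_insert_card (hbound B hB), sum_const,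
        card_powersetCard, card_Icc, smul_eq_mul, Nat.add_sub_cancel, mul_comm (choose n r),
        add_one_mul_choose_eq]
      ring

/-- The paper's `(m + B) ∪ {0, m} ∪ [2m, ∞)`, with `m` written as `m + 0`. -/
def semigroupOfSubset (m : ℕ) (B : Finset ℕ) : Set ℕ :=
  {x | x = 0 ∨ (m ≤ x ∧ x - m ∈ insert 0 B) ∨ 2 * m ≤ x}

lemma frob_lt_of_forall_notMem {S : Set ℕ} {n : ℕ} (hn : 0 < n) (h : ∀ x ∉ S, x < n) :
    frob S < n := by
  rcases Sᶜ.eq_empty_or_nonempty with he | hne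
  · simpa [frob, he] using hn
  · exact h _ (Nat.sSup_mem hne ⟨n, fun x hx => (h x hx).le⟩)

namespace IsNumericalSemigroup

variable {S : Set ℕ}

lemma isLeast_mult (hS : IsNumericalSemigroup S) : IsLeast {x | x ∈ S ∧ x ≠ 0} (mult S) := by
  obtain ⟨x, hx, hx0⟩ := hS.2.2.infinite_compl.exists_gt 0
  rw [compl_compl] at hx
  rw [mult, elt, Nat.sub_self, nth_zero]
  exact isLeast_csInf ⟨x, hx, hx0.ne'⟩

lemma mem_of_frob_lt (hS : IsNumericalSemigroup S) {x : ℕ} (hx : frob S < x) : x ∈ S := by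
  by_contra h
  exact (le_csSup hS.2.2.bddAbove h).not_gt hx

lemma exists_eq_semigroupOfSubset (hS : IsNumericalSemigroup S) (hF : frob S < 2 * mult S) :
    ∃ B ⊆ Icc 1 (mult S - 1), S = semigroupOfSubset (mult S) B := by
  classical
  obtain ⟨⟨hmS, hm0⟩, hmin⟩ := hS.isLeast_mult
  refine ⟨(Icc 1 (mult S - 1)).filter (mult S + · ∈ S), filter_subset _ _, ?_⟩
  ext x
  simp only [semigroupOfSubset, Set.mem_ofPred_eq, mem_insert, mem_filter, mem_Icc]
  constructor
  · intro hx
    rcases eq_or_ne x 0 with rfl | hx0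
    · exact Or.inl rfl
    have hmx : mult S ≤ x := hmin ⟨hx, hx0⟩
    rcases lt_or_ge x (2 * mult S) with hx2 | hx2
    · refine Or.inr (Or.inl ⟨hmx, ?_⟩)
      rcases eq_or_ne (x - mult S) 0 with h0 | h0
      · exact Or.inl h0
      · exact Or.inr ⟨⟨by omega, by omega⟩, by rwa [Nat.add_sub_cancel' hmx]⟩
    · exact Or.inr (Or.inr hx2)
  · rintro (rfl | ⟨hmx, h0 | ⟨-, hx⟩⟩ | hx2)
    · exact hS.1
    · rwa [show x = mult S by omega]
    · rwa [Nat.add_sub_cancel' hmx] at hx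
    · exact hS.mem_of_frob_lt (by omega)

end IsNumericalSemigroup

section semigroupOfSubset

variable {m : ℕ} {B : Finset ℕ}

lemma le_of_mem_semigroupOfSubset {x : ℕ} (hx : x ∈ semigroupOfSubset m B) (hx0 : x ≠ 0) :
    m ≤ x := by
  rcases hx with h | ⟨h, -⟩ | h <;> omega

lemma add_mem_semigroupOfSubset_iff {a : ℕ} (ha : a < m) :
    m + a ∈ semigroupOfSubset m B ↔ a ∈ insert 0 B := by
  simp only [semigroupOfSubset, Set.mem_ofPred_eq, Nat.add_sub_cancel_left]
  constructor
  · rintro (h | ⟨-, h⟩ | h)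
    · omega
    · exact h
    · omega
  · exact fun h => Or.inr (Or.inl ⟨by omega, h⟩)

lemma isNumericalSemigroup_semigroupOfSubset :
    IsNumericalSemigroup (semigroupOfSubset m B) := by
  refine ⟨Or.inl rfl, fun a ha b hb => ?_, (Set.finite_Iio (2 * m)).subset fun x hx => ?_⟩
  · rcases eq_or_ne a 0 with rfl | ha0
    · simpa using hb
    rcases eq_or_ne b 0 with rfl | hb0
    · simpa using ha
    have := le_of_mem_semigroupOfSubset ha ha0
    have := le_of_mem_semigroupOfSubset hb hb0
    exact Or.inr (Or.inr (by omega))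
  · by_contra h
    exact hx (Or.inr (Or.inr (by simpa using h)))

lemma frob_semigroupOfSubset_lt (hm : 0 < m) : frob (semigroupOfSubset m B) < 2 * m :=
  frob_lt_of_forall_notMem (by omega) fun x hx => by
    by_contra h
    exact hx (Or.inr (Or.inr (by omega)))

lemma compl_semigroupOfSubset :
    (semigroupOfSubset m B)ᶜ = ↑(Ico 1 (2 * m) \ (insert 0 B).image (m + ·)) := by
  ext x
  simp only [Set.mem_compl_iff, coe_sdiff, coe_Ico, coe_image, Set.mem_sdiff, Set.mem_Ico,
    Set.mem_image, mem_coe, semigroupOfSubset, Set.mem_ofPred_eq]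
  constructor
  · intro hx
    refine ⟨⟨?_, ?_⟩, ?_⟩
    · by_contra
      exact hx (Or.inl (by omega))
    · by_contra
      exact hx (Or.inr (Or.inr (by omega)))
    · rintro ⟨a, ha, rfl⟩
      exact hx (Or.inr (Or.inl ⟨by omega, by simpa using ha⟩))
  · rintro ⟨⟨h1, h2⟩, hx⟩ (h | ⟨hmx, ha⟩ | h)
    · omega
    · exact hx ⟨x - m, ha, by omega⟩
    · omega

lemma genus_semigroupOfSubset (hm : 0 < m) (hB : B ⊆ Icc 1 (m - 1)) :
    genus (semigroupOfSubset m B) = 2 * m - 2 - #B := by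
  have himage : (insert 0 B).image (m + ·) ⊆ Ico 1 (2 * m) := by
    intro x hx
    obtain ⟨a, ha, rfl⟩ := mem_image.1 hx
    have := forall_mem_insert_zero_le hB a ha
    exact mem_Ico.2 ⟨by omega, by omega⟩
  rw [genus, compl_semigroupOfSubset, Set.ncard_coe_finset, card_sdiff_of_subset himage,
    card_image_of_injective _ (add_right_injective m), card_insert_zero_of_subset_Icc hB, card_Ico]
  omega

lemma elt_semigroupOfSubset (hm : 0 < m) (hB : B ⊆ Icc 1 (m - 1)) {j : ℕ} (hj : j ≤ #B) :
    elt (semigroupOfSubset m B) (j + 1) = m + nth (· ∈ insert 0 B) j := by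
  classical
  have hjA : j < #(insert 0 B) := by rw [card_insert_zero_of_subset_Icc hB]; omega
  have haA := Finset.nth_mem_of_lt_card hjA
  have ha := forall_mem_insert_zero_le hB _ haA
  rw [elt, Nat.add_sub_cancel]
  refine nth_eq_of_count_eq ⟨(add_mem_semigroupOfSubset_iff (by omega)).2 haA, by omega⟩ ?_
  rw [count_add, count_of_forall_not fun x hx h => (le_of_mem_semigroupOfSubset h.1 h.2).not_gt hx,
    zero_add, count_congr_of_lt (q := (· ∈ insert 0 B)) fun k hk => ?_,
    Finset.count_nth_of_lt_card hjA]
  rw [add_mem_semigroupOfSubset_iff (by omega)]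
  exact and_iff_left (by omega)

lemma mult_semigroupOfSubset (hm : 0 < m) (hB : B ⊆ Icc 1 (m - 1)) :
    mult (semigroupOfSubset m B) = m := by
  rw [mult, ← zero_add 1, elt_semigroupOfSubset hm hB (zero_le _),
    nth_zero_of_zero (mem_insert_self 0 B), add_zero]

lemma mem_iff_add_mem_semigroupOfSubset (hB : B ⊆ Icc 1 (m - 1)) {b : ℕ} :
    b ∈ B ↔ 1 ≤ b ∧ b < m ∧ m + b ∈ semigroupOfSubset m B := by
  constructor
  · intro hb
    have := mem_Icc.1 (hB hb)
    exact ⟨by omega, by omega,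
      (add_mem_semigroupOfSubset_iff (by omega)).2 (mem_insert_of_mem hb)⟩
  · rintro ⟨hb1, hbm, h⟩
    rcases mem_insert.1 ((add_mem_semigroupOfSubset_iff hbm).1 h) with rfl | h
    · omega
    · exact h

lemma injOn_semigroupOfSubset : Set.InjOn (semigroupOfSubset m) {B | B ⊆ Icc 1 (m - 1)} :=
  fun B hB C hC h => by
    ext b
    rw [mem_iff_add_mem_semigroupOfSubset hB, mem_iff_add_mem_semigroupOfSubset hC, h]

end semigroupOfSubset

theorem setOf_genus_mult_frob_eq_image (g m : ℕ) (hg : g + 2 ≤ 2 * m) :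
    {S : Set ℕ | IsNumericalSemigroup S ∧ genus S = g ∧ mult S = m ∧ frob S < 2 * m} =
      semigroupOfSubset m '' ↑((Icc 1 (m - 1)).powersetCard (2 * m - g - 2)) := by
  have hm : 0 < m := by omega
  ext S
  simp only [Set.mem_ofPred_eq, Set.mem_image, mem_coe, mem_powersetCard]
  constructor
  · rintro ⟨hS, rfl, rfl, hF⟩
    obtain ⟨B, hB, hSB⟩ := hS.exists_eq_semigroupOfSubset hF
    have hgenus := genus_semigroupOfSubset hm hB
    have hcard := card_le_card hB
    rw [← hSB] at hgenus
    rw [card_Icc] at hcard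
    exact ⟨B, ⟨hB, by omega⟩, hSB.symm⟩
  · rintro ⟨B, ⟨hB, hcard⟩, rfl⟩
    refine ⟨isNumericalSemigroup_semigroupOfSubset, ?_, mult_semigroupOfSubset hm hB,
      frob_semigroupOfSubset_lt hm⟩
    rw [genus_semigroupOfSubset hm hB, hcard]
    omega

theorem sum_elt_semigroupOfSubset {m r k : ℕ} (hm : 0 < m) (hk : k ≤ r) :
    ∑ B ∈ (Icc 1 (m - 1)).powersetCard r, elt (semigroupOfSubset m B) (k + 1) =
      (m - 1).choose r * m + k * m.choose (r + 1) := by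
  rw [sum_congr rfl fun B hB => elt_semigroupOfSubset hm (mem_powersetCard.1 hB).1
      ((mem_powersetCard.1 hB).2 ▸ hk),
    sum_add_distrib, sum_const, card_powersetCard, card_Icc, smul_eq_mul,
    sum_nth_insert_zero_powersetCard_Icc _ _ _ hk, Nat.add_sub_cancel, Nat.sub_add_cancel hm]

theorem stmt10_general (g m k : ℕ) (hm2 : m ≤ g + 1)
    (hk2 : k + g + 2 ≤ 2 * m)
    (𝒮 : Set (Set ℕ))
    (h𝒮 : 𝒮 = {S : Set ℕ | IsNumericalSemigroup S ∧ genus S = g ∧ mult S = m ∧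
      frob S < 2 * m}) :
    𝒮.Finite ∧
    (∑ᶠ S ∈ 𝒮, ((elt S (k + 1) : ℕ) : ℚ)) / (𝒮.ncard : ℚ)
      = (m : ℚ) + (m : ℚ) * (k : ℚ) / (2 * (m : ℚ) - (g : ℚ) - 1) := by
  have hm : 0 < m := by omega
  set r := 2 * m - g - 2
  have hinj : Set.InjOn (semigroupOfSubset m) ↑((Icc 1 (m - 1)).powersetCard r) :=
    injOn_semigroupOfSubset.mono fun B hB => (mem_powersetCard.1 hB).1
  rw [h𝒮, setOf_genus_mult_frob_eq_image g m (by omega)]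
  refine ⟨(finite_toSet _).image _, ?_⟩
  rw [finsum_mem_image hinj, finsum_mem_coe_finset, hinj.ncard_image, Set.ncard_coe_finset,
    card_powersetCard, card_Icc, Nat.add_sub_cancel, ← Nat.cast_sum,
    sum_elt_semigroupOfSubset hm (by omega)]
  have hchoose : ((m - 1).choose r : ℚ) ≠ 0 := by exact_mod_cast (choose_pos (by omega)).ne'
  have hden : 2 * (m : ℚ) - g - 1 = r + 1 := by
    have : (r : ℚ) + g + 2 = 2 * m := by exact_mod_cast (show r + g + 2 = 2 * m by omega)
    linarith
  have hpascal : (m : ℚ) * (m - 1).choose r = m.choose (r + 1) * (r + 1) := by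
    exact_mod_cast Nat.sub_add_cancel hm ▸ add_one_mul_choose_eq (m - 1) r
  rw [hden]
  push_cast
  rw [div_eq_iff hchoose]
  field_simp
  linear_combination -(k : ℚ) * hpascal

theorem stmt10 (g m k : ℕ) (hm1 : (g : ℚ) / 2 + 1 ≤ (m : ℚ)) (hm2 : m ≤ g + 1)
    (hk : 1 ≤ k) (hk2 : k + g + 2 ≤ 2 * m)
    (𝒮 : Set (Set ℕ))
    (h𝒮 : 𝒮 = {S : Set ℕ | IsNumericalSemigroup S ∧ genus S = g ∧ mult S = m ∧
      frob S < 2 * m}) :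
    𝒮.Finite ∧
    (∑ᶠ S ∈ 𝒮, ((elt S (k + 1) : ℕ) : ℚ)) / (𝒮.ncard : ℚ)
      = (m : ℚ) + (m : ℚ) * (k : ℚ) / (2 * (m : ℚ) - (g : ℚ) - 1) :=
  stmt10_general g m k hm2 hk2 𝒮 h𝒮
end

section
/- Let F and g be positive integers with the set B_Frob(F,g) nonempty, and let 1 ≤ k ≤ F - g. Over the uniform distribution on numerical semigroups S with Frobenius number F, genus g, and F < 2·m(S), the expected value of a_k(S) equals ⌊F/2⌋ + (⌊(F-1)/2⌋ + 1)·k/(F - g + 1). -/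
/-! If `F < 2 m(S)`, every nonzero element of `S` below `F` lies in `(⌊F/2⌋, F)`, and conversely
any subset of that window together with `0` and everything above `F` is closed under addition, since
two of its nonzero elements already sum past `F`. So these semigroups are exactly
`{0} ∪ (⌊F/2⌋ + B) ∪ (F, ∞)` with `B` a `(F - g)`-subset of `{1, …, ⌊(F-1)/2⌋}`, and
`a_k(S) = ⌊F/2⌋ + b_k`. Over the `t`-subsets of `{1, …, m}` the `k`-th smallest elements sum to
`k · C(m+1, t+1)` (induction on `m`), and dividing by `C(m, t)` gives `k (m+1) / (t+1)`. -/

open Finset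

namespace Nat

theorem count_congr {p q : ℕ → Prop} [DecidablePred p] [DecidablePred q] {n : ℕ}
    (h : ∀ k < n, p k ↔ q k) : count p n = count q n :=
  le_antisymm (count_mono_left fun k hk => (h k hk).1) (count_mono_left fun k hk => (h k hk).2)

theorem nth_mem_finset {B : Finset ℕ} {i : ℕ} (hi : i < #B) : nth (· ∈ B) i ∈ B :=
  nth_mem_of_lt_card B.finite_toSet (by rwa [finite_toSet_toFinset])

theorem count_nth_mem_finset {B : Finset ℕ} {i : ℕ} (hi : i < #B) :
    count (· ∈ B) (nth (· ∈ B) i) = i :=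
  count_nth_of_lt_card_finite B.finite_toSet (by rwa [finite_toSet_toFinset])

section Insert

variable {B : Finset ℕ} {a : ℕ}

theorem count_mem_insert_of_le {n : ℕ} (hna : n ≤ a) :
    count (· ∈ insert a B) n = count (· ∈ B) n :=
  count_congr fun k hk => by simp [mem_insert, show k ≠ a by omega]

theorem nth_mem_insert_of_lt_card (hB : ∀ b ∈ B, b < a) {i : ℕ} (hi : i < #B) :
    nth (· ∈ insert a B) i = nth (· ∈ B) i := by
  have hmem := nth_mem_finset hi
  conv_lhs => rw [← count_nth_mem_finset hi,
    ← count_mem_insert_of_le (hB _ hmem).le]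
  exact nth_count (mem_insert_of_mem hmem)

theorem nth_mem_insert_card (hB : ∀ b ∈ B, b < a) : nth (· ∈ insert a B) #B = a := by
  have hcount : count (· ∈ B) a = #B := by
    rw [count_eq_card_filter_range, filter_mem_eq_inter,
      inter_eq_right.2 fun b hb => mem_range.2 (hB b hb)]
  conv_lhs => rw [← hcount, ← count_mem_insert_of_le le_rfl]
  exact nth_count (mem_insert_self a B)

end Insert

end Nat

namespace Finset

theorem sum_powersetCard_succ_insert_s11 {α β : Type*} [DecidableEq α] [AddCommMonoid β]
    {s : Finset α} {x : α} (hx : x ∉ s) (n : ℕ) (f : Finset α → β) :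
    ∑ B ∈ powersetCard (n + 1) (insert x s), f B
      = ∑ B ∈ powersetCard (n + 1) s, f B + ∑ B ∈ powersetCard n s, f (insert x B) := by
  have hnot : ∀ B ∈ powersetCard n s, x ∉ B := fun B hB h =>
    hx ((mem_powersetCard.1 hB).1 h)
  rw [powersetCard_succ_insert hx, sum_union, sum_image]
  · exact fun B hB C hC h => by
      rw [← erase_insert (hnot B hB), ← erase_insert (hnot C hC), h]
  · refine disjoint_left.2 fun B hB hB' => ?_
    obtain ⟨C, -, rfl⟩ := mem_image.1 hB'
    exact hx ((mem_powersetCard.1 hB).1 (mem_insert_self x C))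

theorem sum_nth_powersetCard_Icc (m : ℕ) {t i : ℕ} (hi : i < t) :
    ∑ B ∈ (Icc 1 m).powersetCard t, Nat.nth (· ∈ B) i = (i + 1) * (m + 1).choose (t + 1) := by
  -- `m + 1` exceeds every element of `Icc 1 m`, so adding it to `B` only changes the last element.
  induction m generalizing t i with
  | zero =>
    rw [Icc_eq_empty (by omega), powersetCard_eq_empty.2 (by simp; omega),
      Nat.choose_eq_zero_of_lt (by omega), sum_empty, mul_zero]
  | succ m ih =>
    obtain ⟨t, rfl⟩ : ∃ t', t = t' + 1 := ⟨t - 1, by omega⟩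
    have hlt : ∀ B ∈ (Icc 1 m).powersetCard t, ∀ b ∈ B, b < m + 1 := fun B hB b hb =>
      Nat.lt_add_one_of_le (mem_Icc.1 ((mem_powersetCard.1 hB).1 hb)).2
    rw [← insert_Icc_right_eq_Icc_add_one (by omega),
      sum_powersetCard_succ_insert_s11 (by simp) t, ih hi, Nat.choose_succ_succ' (m + 1) (t + 1)]
    rcases (Nat.lt_succ_iff.1 hi).lt_or_eq with hit | rfl
    · rw [sum_congr rfl fun B hB => Nat.nth_mem_insert_of_lt_card (hlt B hB)
        (by rw [(mem_powersetCard.1 hB).2]; exact hit), ih hit]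
      ring
    · rw [sum_congr rfl fun B hB => (mem_powersetCard.1 hB).2 ▸ Nat.nth_mem_insert_card (hlt B hB),
        sum_const, card_powersetCard, Nat.card_Icc, smul_eq_mul, Nat.add_sub_cancel,
        mul_comm (m.choose i), Nat.add_one_mul_choose_eq]
      ring

theorem sum_nth_powersetCard_Icc_div_card {m t i : ℕ} (hi : i < t) (htm : t ≤ m) :
    (∑ B ∈ (Icc 1 m).powersetCard t, (Nat.nth (· ∈ B) i : ℚ)) / #((Icc 1 m).powersetCard t)
      = (m + 1) * (i + 1) / (t + 1) := by
  have hchoose : ((m + 1) * m.choose t : ℚ) = (m + 1).choose (t + 1) * (t + 1) := by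
    exact_mod_cast Nat.add_one_mul_choose_eq m t
  have hpos : (m.choose t : ℚ) ≠ 0 := by exact_mod_cast (Nat.choose_pos htm).ne'
  rw [← Nat.cast_sum, sum_nth_powersetCard_Icc m hi, card_powersetCard, Nat.card_Icc,
    Nat.add_sub_cancel, div_eq_div_iff hpos (by positivity)]
  push_cast
  linear_combination (i + 1 : ℚ) * hchoose.symm

end Finset

namespace NumericalSemigroup

variable {S : Set ℕ} {F n : ℕ} {B : Finset ℕ}

theorem frob_notMem (hS : Sᶜ.Finite) (hF : frob S ≠ 0) : frob S ∉ S := by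
  have hne : Sᶜ.Nonempty := by
    by_contra h
    simp [frob, Set.not_nonempty_iff_eq_empty.1 h] at hF
  exact Nat.sSup_mem hne hS.bddAbove

theorem mem_of_frob_lt (hS : Sᶜ.Finite) (h : frob S < n) : n ∈ S := by
  by_contra hn
  exact h.not_ge (le_csSup hS.bddAbove hn)

theorem mult_le (hn : n ∈ S) (h0 : n ≠ 0) : mult S ≤ n := by
  rw [mult, elt, Nat.sub_self, Nat.nth_zero]
  exact Nat.sInf_le ⟨hn, h0⟩

theorem mult_mem (hS : Sᶜ.Finite) : mult S ∈ S ∧ mult S ≠ 0 := by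
  obtain ⟨n, hn⟩ := (hS.insert 0).exists_notMem
  rw [Set.mem_insert_iff, Set.mem_compl_iff, not_or, not_not] at hn
  rw [mult, elt, Nat.sub_self, Nat.nth_zero]
  exact Nat.sInf_mem (s := {n | n ∈ S ∧ n ≠ 0}) ⟨n, hn.2, hn.1⟩

def semigroupOf (F : ℕ) (B : Finset ℕ) : Set ℕ :=
  {n | n = 0 ∨ (∃ b ∈ B, n = F / 2 + b) ∨ F < n}

theorem mem_semigroupOf : n ∈ semigroupOf F B ↔ n = 0 ∨ (∃ b ∈ B, n = F / 2 + b) ∨ F < n :=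
  Iff.rfl

theorem half_lt_of_mem_semigroupOf (hB : B ⊆ Icc 1 ((F - 1) / 2)) (hn : n ∈ semigroupOf F B)
    (h0 : n ≠ 0) : F / 2 < n := by
  rcases hn with rfl | ⟨b, hb, rfl⟩ | h
  · exact absurd rfl h0
  · have := mem_Icc.1 (hB hb); omega
  · omega

theorem add_mem_semigroupOf_iff {b : ℕ} (hb0 : b ≠ 0) (hb : b ≤ (F - 1) / 2) :
    F / 2 + b ∈ semigroupOf F B ↔ b ∈ B := by
  refine ⟨fun h => ?_, fun h => Or.inr (Or.inl ⟨b, h, rfl⟩)⟩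
  rcases h with h | ⟨b', hb', h⟩ | h
  · omega
  · rwa [Nat.add_left_cancel h]
  · omega

theorem compl_semigroupOf : (semigroupOf F B)ᶜ = ↑(Icc 1 F \ B.image (F / 2 + ·)) := by
  ext n
  simp only [Set.mem_compl_iff, mem_semigroupOf, coe_sdiff, coe_Icc, coe_image, Set.mem_sdiff,
    Set.mem_Icc, Set.mem_image, mem_coe]
  grind

theorem isNumericalSemigroup_semigroupOf (hB : B ⊆ Icc 1 ((F - 1) / 2)) :
    IsNumericalSemigroup (semigroupOf F B) := by
  refine ⟨Or.inl rfl, fun a ha b hb => ?_, compl_semigroupOf ▸ finite_toSet _⟩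
  rcases eq_or_ne a 0 with rfl | ha0
  · simpa using hb
  rcases eq_or_ne b 0 with rfl | hb0
  · simpa using ha
  have := half_lt_of_mem_semigroupOf hB ha ha0
  have := half_lt_of_mem_semigroupOf hB hb hb0
  exact Or.inr (Or.inr (by omega))

theorem genus_semigroupOf (hB : B ⊆ Icc 1 ((F - 1) / 2)) :
    genus (semigroupOf F B) = F - #B := by
  have himage : B.image (F / 2 + ·) ⊆ Icc 1 F := fun n hn => by
    obtain ⟨b, hb, rfl⟩ := mem_image.1 hn
    have := mem_Icc.1 (hB hb)
    exact mem_Icc.2 ⟨by omega, by omega⟩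
  rw [genus, compl_semigroupOf, Set.ncard_coe_finset, card_sdiff_of_subset himage, Nat.card_Icc,
    card_image_of_injective _ (add_right_injective _), Nat.add_sub_cancel]

theorem frob_semigroupOf (hF : F ≠ 0) (hB : B ⊆ Icc 1 ((F - 1) / 2)) :
    frob (semigroupOf F B) = F := by
  refine IsGreatest.csSup_eq ⟨?_, fun n hn => ?_⟩
  · rw [compl_semigroupOf, coe_sdiff, Set.mem_sdiff, coe_Icc, coe_image]
    refine ⟨⟨by omega, le_rfl⟩, ?_⟩
    rintro ⟨b, hb, h : F / 2 + b = F⟩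
    have := mem_Icc.1 (hB hb)
    omega
  · rw [compl_semigroupOf, coe_sdiff, Set.mem_sdiff, coe_Icc] at hn
    exact hn.1.2

theorem lt_two_mul_mult_semigroupOf (hB : B ⊆ Icc 1 ((F - 1) / 2)) :
    F < 2 * mult (semigroupOf F B) := by
  have hmem := mult_mem (isNumericalSemigroup_semigroupOf hB).2.2
  have := half_lt_of_mem_semigroupOf hB hmem.1 hmem.2
  omega

theorem elt_semigroupOf (hB : B ⊆ Icc 1 ((F - 1) / 2)) {i : ℕ} (hi : i < #B) :
    elt (semigroupOf F B) (i + 1) = F / 2 + Nat.nth (· ∈ B) i := by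
  classical
  set b := Nat.nth (· ∈ B) i
  have hb := Nat.nth_mem_finset hi
  have hb' := mem_Icc.1 (hB hb)
  let p : ℕ → Prop := fun n => n ∈ semigroupOf F B ∧ n ≠ 0
  have hcount : Nat.count p (F / 2 + b) = i := by
    rw [Nat.count_add, Nat.count_iff_forall_not.2 fun k hk hpk =>
        (half_lt_of_mem_semigroupOf hB hpk.1 hpk.2).not_ge hk.le, zero_add,
      ← Nat.count_nth_mem_finset hi]
    refine Nat.count_congr fun k hk => ?_
    rcases eq_or_ne k 0 with rfl | hk0
    · refine iff_of_false (fun hp => (half_lt_of_mem_semigroupOf hB hp.1 hp.2).ne ?_) fun h0 => ?_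
      · simp
      · have := mem_Icc.1 (hB h0); omega
    · show F / 2 + k ∈ semigroupOf F B ∧ F / 2 + k ≠ 0 ↔ k ∈ B
      rw [add_mem_semigroupOf_iff hk0 (by omega)]
      exact and_iff_left (by omega)
  rw [elt, Nat.add_sub_cancel, ← hcount]
  exact Nat.nth_count (p := p) ⟨Or.inr (Or.inl ⟨b, hb, rfl⟩), by omega⟩

open scoped Classical in
theorem filter_mem_semigroupOf (hB : B ⊆ Icc 1 ((F - 1) / 2)) :
    (Icc 1 ((F - 1) / 2)).filter (F / 2 + · ∈ semigroupOf F B) = B := by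
  ext b
  rw [mem_filter]
  constructor
  · rintro ⟨hb, h⟩
    have := mem_Icc.1 hb
    exact (add_mem_semigroupOf_iff (by omega) this.2).1 h
  · intro h
    exact ⟨hB h, Or.inr (Or.inl ⟨b, h, rfl⟩)⟩

open scoped Classical in
theorem eq_semigroupOf_filter (hS : IsNumericalSemigroup S) (hF : frob S = F) (hF0 : F ≠ 0)
    (hm : F < 2 * mult S) :
    S = semigroupOf F ((Icc 1 ((F - 1) / 2)).filter (F / 2 + · ∈ S)) := by
  subst hF
  have hgap := frob_notMem hS.2.2 hF0
  ext n
  simp only [mem_semigroupOf, mem_filter, mem_Icc]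
  refine ⟨fun hn => ?_, ?_⟩
  · rcases eq_or_ne n 0 with rfl | h0
    · exact Or.inl rfl
    rcases lt_or_ge (frob S) n with h | h
    · exact Or.inr (Or.inr h)
    have := mult_le hn h0
    have : n ≠ frob S := fun he => hgap (he ▸ hn)
    refine Or.inr (Or.inl ⟨n - frob S / 2, ⟨⟨by omega, by omega⟩, ?_⟩, by omega⟩)
    rwa [Nat.add_sub_cancel' (by omega)]
  · rintro (rfl | ⟨b, ⟨-, hb⟩, rfl⟩ | h)
    · exact hS.1
    · exact hb
    · exact mem_of_frob_lt hS.2.2 h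

theorem injOn_semigroupOf : Set.InjOn (semigroupOf F) {B | B ⊆ Icc 1 ((F - 1) / 2)} :=
  fun B hB C hC h => by
    classical
    rw [← filter_mem_semigroupOf hB, ← filter_mem_semigroupOf hC, h]

theorem setOf_eq_image_powersetCard {g : ℕ} (hF : F ≠ 0) (hgF : g ≤ F) :
    {S : Set ℕ | IsNumericalSemigroup S ∧ frob S = F ∧ genus S = g ∧ F < 2 * mult S}
      = ↑(((Icc 1 ((F - 1) / 2)).powersetCard (F - g)).image (semigroupOf F)) := by
  classical
  ext S
  simp only [Set.mem_ofPred_eq, coe_image, Set.mem_image, mem_coe, mem_powersetCard]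
  constructor
  · rintro ⟨hS, hfrob, hgenus, hm⟩
    have hSB := eq_semigroupOf_filter hS hfrob hF hm
    refine ⟨_, ⟨filter_subset _ _, ?_⟩, hSB.symm⟩
    have hcard := card_le_card (filter_subset (F / 2 + · ∈ S) (Icc 1 ((F - 1) / 2)))
    rw [hSB, genus_semigroupOf (filter_subset _ _)] at hgenus
    rw [Nat.card_Icc] at hcard
    omega
  · rintro ⟨B, ⟨hB, hcard⟩, rfl⟩
    exact ⟨isNumericalSemigroup_semigroupOf hB, frob_semigroupOf hF hB,
      by rw [genus_semigroupOf hB, hcard]; omega, lt_two_mul_mult_semigroupOf hB⟩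

end NumericalSemigroup

open NumericalSemigroup

theorem stmt11 (F g k : ℕ) (hk : 1 ≤ k) (hk2 : k + g ≤ F)
    (𝒮 : Set (Set ℕ))
    (h𝒮 : 𝒮 = {S : Set ℕ | IsNumericalSemigroup S ∧ frob S = F ∧ genus S = g ∧
      F < 2 * mult S})
    (hne : 𝒮.Nonempty) :
    𝒮.Finite ∧
    (∑ᶠ S ∈ 𝒮, ((elt S k : ℕ) : ℚ)) / (𝒮.ncard : ℚ)
      = ((F / 2 : ℕ) : ℚ) + (((((F - 1) / 2 : ℕ)) : ℚ) + 1) * (k : ℚ) / ((F : ℚ) - (g : ℚ) + 1) := by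
  obtain ⟨i, rfl⟩ : ∃ i, k = i + 1 := ⟨k - 1, by omega⟩
  have hinj : Set.InjOn (semigroupOf F) ↑((Icc 1 ((F - 1) / 2)).powersetCard (F - g)) :=
    injOn_semigroupOf.mono fun B hB => (mem_powersetCard.1 hB).1
  rw [h𝒮, setOf_eq_image_powersetCard (by omega) (by omega)] at hne ⊢
  have htm : F - g ≤ (F - 1) / 2 := by
    simpa using powersetCard_nonempty.1 (image_nonempty.1 (coe_nonempty.1 hne))
  refine ⟨finite_toSet _, ?_⟩
  have helt : ∀ B ∈ (Icc 1 ((F - 1) / 2)).powersetCard (F - g),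
      (elt (semigroupOf F B) (i + 1) : ℚ) = (F / 2 : ℕ) + (Nat.nth (· ∈ B) i : ℚ) :=
    fun B hB => by
      rw [elt_semigroupOf (mem_powersetCard.1 hB).1 (by rw [(mem_powersetCard.1 hB).2]; omega)]
      push_cast; rfl
  rw [Set.ncard_coe_finset, card_image_of_injOn hinj, finsum_mem_coe_finset, sum_image hinj,
    sum_congr rfl helt, sum_add_distrib, sum_const, nsmul_eq_mul, add_div,
    mul_div_cancel_left₀ _ (by simp [Nat.choose_eq_zero_iff]; omega),
    sum_nth_powersetCard_Icc_div_card (by omega) htm, Nat.cast_sub (by omega)]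
  push_cast
  ring
end
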